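/- There exists a constant C > 0, depending only on ν and K, such that for every ξ ∈ ℝ³ with ξ ≠ 0 and every ξ_* ∈ ℝ³, ∫_{𝕊²} b((ξ/|ξ|)·σ) 𝟙_{|ξ − |ξ|σ| ≥ ⟨ξ_*⟩} dσ ≤ C (⟨ξ⟩/⟨ξ_*⟩)^{ν} 𝟙_{√2 |ξ| ≥ ⟨ξ_*⟩}. -/

import Mathlib

/-!
Write `θ = angle ξ σ` on the unit sphere. Then `|ξ - |ξ|σ|² = 2|ξ|²(1 - cos θ)`: on the support
of `b`, where `θ ≤ π/2`, this distance is at most `√2 |ξ|`, which accounts for the indicator on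
the right; and it is at most `|ξ| θ`, so the integrand is at most `K θ^(-2-ν)` on `θ ≥ θ₀`,
`θ₀ = ⟨ξ_*⟩/|ξ|`. A spherical cap of angular radius `α` has measure `O(α²)`, as a Lipschitz image
of a rectangle of area `O(α²)`. Summing `θ^(-2-ν)` over the dyadic shells
`θ₀ 2^j ≤ θ < θ₀ 2^(j+1)` then gives a geometric series of size `O(θ₀^(-ν))`.
-/

open MeasureTheory Filter
open scoped Topology ENNReal InnerProductSpace FourierTransform

noncomputable section

/-- Velocity space `ℝ³`. -/
abbrev V3 : Type := EuclideanSpace ℝ (Fin 3)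

/-- Japanese bracket `⟨v⟩ = (1+|v|²)^{1/2}`. -/
def jap (v : V3) : ℝ := Real.sqrt (1 + ‖v‖ ^ 2)

/-- Normalized Maxwellian `μ(v) = (2π)^{-3/2} exp(-|v|²/2)`. -/
def maxw (v : V3) : ℝ := (2 * Real.pi) ^ (-(3 : ℝ) / 2) * Real.exp (-‖v‖ ^ 2 / 2)

/-- Surface measure on the unit sphere `𝕊² ⊂ ℝ³` (2-dimensional Hausdorff measure). -/
def sphereMeasure : Measure V3 := (μH[2] : Measure V3).restrict (Metric.sphere (0 : V3) 1)

/-- Post-collisional velocity `v' = (v+v_*)/2 + (|v-v_*|/2)σ`. -/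
def vPost (v vs σ : V3) : V3 := (2 : ℝ)⁻¹ • (v + vs) + (‖v - vs‖ / 2) • σ

/-- Post-collisional velocity `v'_* = (v+v_*)/2 - (|v-v_*|/2)σ`. -/
def vPostS (v vs σ : V3) : V3 := (2 : ℝ)⁻¹ • (v + vs) - (‖v - vs‖ / 2) • σ

/-- Deviation angle `θ`, `cos θ = ((v-v_*)/|v-v_*|)·σ`. -/
def dev (v vs σ : V3) : ℝ := Real.arccos ⟪‖v - vs‖⁻¹ • (v - vs), σ⟫_ℝ

/-- Collision kernel `B(v-v_*,σ) = |v-v_*|^γ b(((v-v_*)/|v-v_*|)·σ)`. -/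
def Bker (γ : ℝ) (b : ℝ → ℝ) (v vs σ : V3) : ℝ :=
  ‖v - vs‖ ^ γ * b ⟪‖v - vs‖⁻¹ • (v - vs), σ⟫_ℝ

/-- Angular-truncated trilinear pairing `∭_{θ ≥ ε} Bf (F'_* G' - F_* G) h`. -/
def QTrunc (Bf : V3 → V3 → V3 → ℝ) (F G h : V3 → ℝ) (ε : ℝ) : ℝ :=
  ∫ v : V3, ∫ vs : V3, ∫ σ : V3,
    (if ε ≤ dev v vs σ then
        Bf v vs σ * (F (vPostS v vs σ) * G (vPost v vs σ) - F vs * G v) * h v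
      else 0) ∂sphereMeasure

/-- Truncated pairing defining `⟨Γ(f,g), h⟩`. -/
def GammaTrunc (γ : ℝ) (b : ℝ → ℝ) (f g h : V3 → ℝ) (ε : ℝ) : ℝ :=
  QTrunc (fun v vs σ => Bker γ b v vs σ * Real.sqrt (maxw vs)) f g h ε

/-- Truncated pairing defining `⟨Q_c(F,G), h⟩` (kinetic factor cut off by `φ₀`). -/
def QcTrunc (γ : ℝ) (b φ₀ : ℝ → ℝ) (F G h : V3 → ℝ) (ε : ℝ) : ℝ :=
  QTrunc (fun v vs σ => φ₀ ‖v - vs‖ * Bker γ b v vs σ) F G h ε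

/-- Weighted `L²` norm `‖⟨·⟩^ℓ f‖_{L²}`. -/
def L2w (ℓ : ℝ) (f : V3 → ℝ) : ℝ :=
  (∫ v : V3, jap v ^ (2 * ℓ) * f v ^ 2) ^ ((1 : ℝ) / 2)

/-- Square of the non-isotropic triple norm (as an extended real). -/
def tripleNormSqE (γ : ℝ) (b : ℝ → ℝ) (f : V3 → ℝ) : ℝ≥0∞ :=
  (∫⁻ v : V3, ∫⁻ vs : V3, ∫⁻ σ : V3,
      ENNReal.ofReal (Bker γ b v vs σ * maxw vs * (f (vPost v vs σ) - f v) ^ 2) ∂sphereMeasure)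
    + ∫⁻ v : V3, ∫⁻ vs : V3, ∫⁻ σ : V3,
        ENNReal.ofReal (Bker γ b v vs σ * f vs ^ 2 *
          (Real.sqrt (maxw (vPost v vs σ)) - Real.sqrt (maxw v)) ^ 2) ∂sphereMeasure

/-- The triple norm `|||f|||`. -/
def tripleNorm (γ : ℝ) (b : ℝ → ℝ) (f : V3 → ℝ) : ℝ :=
  Real.sqrt (tripleNormSqE γ b f).toReal

/-- Dissipation functional `𝒟(F,φ) = ∭ B F_* (φ - φ')²`. -/
def Ddiss (γ : ℝ) (b : ℝ → ℝ) (F φ : V3 → ℝ) : ℝ :=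
  (∫⁻ v : V3, ∫⁻ vs : V3, ∫⁻ σ : V3,
      ENNReal.ofReal (Bker γ b v vs σ * F vs * (φ v - φ (vPost v vs σ)) ^ 2) ∂sphereMeasure).toReal

/-- Weighted Sobolev norm `‖f‖_{H^s_ℓ}`. -/
def sobNorm (s ℓ : ℝ) (f : V3 → ℝ) : ℝ :=
  (∫ ξ : V3, jap ξ ^ (2 * s) * ‖𝓕 (fun v : V3 => ((jap v ^ ℓ * f v : ℝ) : ℂ)) ξ‖ ^ 2) ^ ((1 : ℝ) / 2)

/-- Standing assumptions on the angular kernel `b`. -/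
def KernelHyp (ν K : ℝ) (b : ℝ → ℝ) : Prop :=
  Measurable b ∧ (∀ t, 0 ≤ b t) ∧ (∀ t < (0 : ℝ), b t = 0) ∧
    ∀ θ ∈ Set.Ioc (0 : ℝ) (Real.pi / 2),
      K⁻¹ * θ ^ (-2 - ν) ≤ b (Real.cos θ) ∧ b (Real.cos θ) ≤ K * θ ^ (-2 - ν)

open Real InnerProductGeometry Metric
open scoped NNReal

lemma ofReal_rpow_le_tsum_indicator_dyadic {X : Type*} (f : X → ℝ) {r₀ s : ℝ} (hr₀ : 0 < r₀)
    (hs : s ≤ 0) {x : X} (hx : r₀ ≤ f x) :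
    ENNReal.ofReal (f x ^ s) ≤ ∑' j : ℕ, (f ⁻¹' Set.Ico (r₀ * 2 ^ j) (2 * (r₀ * 2 ^ j))).indicator
      (fun _ => ENNReal.ofReal ((r₀ * 2 ^ j) ^ s)) x := by
  obtain ⟨j, hj, hj'⟩ := exists_nat_pow_near ((one_le_div hr₀).2 hx) one_lt_two
  have hmem : x ∈ f ⁻¹' Set.Ico (r₀ * 2 ^ j) (2 * (r₀ * 2 ^ j)) := by
    constructor
    · simpa [mul_comm] using (le_div_iff₀' hr₀).1 hj
    · simpa [pow_succ, mul_comm, mul_left_comm] using (div_lt_iff₀' hr₀).1 hj'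
  refine le_trans ?_ (ENNReal.le_tsum j)
  rw [Set.indicator_of_mem hmem]
  exact ENNReal.ofReal_le_ofReal (rpow_le_rpow_of_nonpos (by positivity) hmem.1 hs)

lemma ofReal_rpow_mul_measure_dyadic_shell_le {X : Type*} [MeasurableSpace X] {μ : Measure X}
    {f : X → ℝ} {c d ν r₀ : ℝ} (hr₀ : 0 < r₀)
    (hμ : ∀ r, 0 < r → μ {x | f x ≤ r} ≤ ENNReal.ofReal (c * r ^ d)) (j : ℕ) :
    ENNReal.ofReal ((r₀ * 2 ^ j) ^ (-d - ν)) * μ (f ⁻¹' Set.Ico (r₀ * 2 ^ j) (2 * (r₀ * 2 ^ j))) ≤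
      ENNReal.ofReal (c * 2 ^ d * r₀ ^ (-ν)) * ENNReal.ofReal (2 ^ (-ν)) ^ j := by
  have hr : 0 < r₀ * 2 ^ j := by positivity
  have hsub : f ⁻¹' Set.Ico (r₀ * 2 ^ j) (2 * (r₀ * 2 ^ j)) ⊆ {x | f x ≤ 2 * (r₀ * 2 ^ j)} :=
    fun x hx => hx.2.le
  have hsplit : (r₀ * 2 ^ j) ^ (-d - ν) * (r₀ * 2 ^ j) ^ d = r₀ ^ (-ν) * ((2 : ℝ) ^ (-ν)) ^ j := by
    rw [← rpow_add hr, show -d - ν + d = -ν by ring, mul_rpow hr₀.le (by positivity),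
      rpow_pow_comm zero_le_two]
  calc _ ≤ ENNReal.ofReal ((r₀ * 2 ^ j) ^ (-d - ν)) *
          ENNReal.ofReal (c * (2 * (r₀ * 2 ^ j)) ^ d) := by
        gcongr
        exact (measure_mono hsub).trans (hμ _ (by linarith))
    _ = ENNReal.ofReal (c * 2 ^ d * r₀ ^ (-ν) * ((2 : ℝ) ^ (-ν)) ^ j) := by
        rw [← ENNReal.ofReal_mul (by positivity), mul_rpow zero_le_two hr.le]
        congr 1
        linear_combination c * 2 ^ d * hsplit
    _ = _ := by rw [ENNReal.ofReal_mul' (by positivity), ENNReal.ofReal_pow (by positivity)]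

theorem setLIntegral_rpow_neg_le_of_measure_le_rpow {X : Type*} [MeasurableSpace X]
    {μ : Measure X} {f : X → ℝ} (hf : Measurable f) {c d ν r₀ : ℝ} (hd : 0 ≤ d) (hν : 0 < ν)
    (hr₀ : 0 < r₀) (hμ : ∀ r, 0 < r → μ {x | f x ≤ r} ≤ ENNReal.ofReal (c * r ^ d)) :
    ∫⁻ x in {x | r₀ ≤ f x}, ENNReal.ofReal (f x ^ (-d - ν)) ∂μ ≤
      ENNReal.ofReal (c * 2 ^ d / (1 - 2 ^ (-ν)) * r₀ ^ (-ν)) := by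
  set shell : ℕ → Set X := fun j => f ⁻¹' Set.Ico (r₀ * 2 ^ j) (2 * (r₀ * 2 ^ j))
  have hshell : ∀ j, MeasurableSet (shell j) := fun j => hf measurableSet_Ico
  have hq : 0 < 1 - (2 : ℝ) ^ (-ν) :=
    sub_pos.2 (rpow_lt_one_of_one_lt_of_neg one_lt_two (neg_neg_of_pos hν))
  calc ∫⁻ x in {x | r₀ ≤ f x}, ENNReal.ofReal (f x ^ (-d - ν)) ∂μ
      ≤ ∫⁻ x, ∑' j, (shell j).indicator
          (fun _ => ENNReal.ofReal ((r₀ * 2 ^ j) ^ (-d - ν))) x ∂μ :=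
        (setLIntegral_mono' (hf measurableSet_Ici) fun x hx =>
          ofReal_rpow_le_tsum_indicator_dyadic f hr₀ (by linarith) hx).trans
          (setLIntegral_le_lintegral _ _)
    _ = ∑' j, ENNReal.ofReal ((r₀ * 2 ^ j) ^ (-d - ν)) * μ (shell j) := by
        rw [lintegral_tsum fun j => (measurable_const.indicator (hshell j)).aemeasurable]
        simp only [lintegral_indicator_const (hshell _)]
    _ ≤ ∑' j, ENNReal.ofReal (c * 2 ^ d * r₀ ^ (-ν)) * ENNReal.ofReal (2 ^ (-ν)) ^ j :=
        ENNReal.tsum_le_tsum (ofReal_rpow_mul_measure_dyadic_shell_le hr₀ hμ)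
    _ = ENNReal.ofReal (c * 2 ^ d / (1 - 2 ^ (-ν)) * r₀ ^ (-ν)) := by
        rw [ENNReal.tsum_mul_left, ENNReal.tsum_geometric, ← ENNReal.ofReal_one,
          ← ENNReal.ofReal_sub _ (by positivity), ← ENNReal.ofReal_inv_of_pos hq,
          ← ENNReal.ofReal_mul' (by positivity)]
        congr 1
        field_simp

section SphericalCap

variable {E : Type*} [NormedAddCommGroup E] [InnerProductSpace ℝ E]

lemma OrthonormalBasis.exists_apply_eq [FiniteDimensional ℝ E] {ι : Type*} [Fintype ι]
    (hE : Module.finrank ℝ E = Fintype.card ι) (i : ι) {u : E} (hu : ‖u‖ = 1) :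
    ∃ b : OrthonormalBasis ι ℝ E, b i = u := by
  have horth : Orthonormal ℝ (({i} : Set ι).domRestrict fun _ => u) :=
    ⟨fun _ => hu, fun j k hjk => absurd (Subtype.ext (j.2.trans k.2.symm)) hjk⟩
  obtain ⟨b, hb⟩ := horth.exists_orthonormalBasis_extension_of_card_eq hE
  exact ⟨b, hb i rfl⟩

/-- Spherical coordinates about the pole `u`, with the longitude rescaled by `α`: the cap of
angular radius `α` is then the `5`-Lipschitz image of a rectangle of area `2πα²`. -/
def capParam (u v w : E) (α : ℝ) (p : Fin 2 → ℝ) : E :=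
  cos (p 0) • u + sin (p 0) • (cos (p 1 / α) • v + sin (p 1 / α) • w)

lemma norm_cos_smul_add_sin_smul_le {v w : E} (hv : ‖v‖ ≤ 1) (hw : ‖w‖ ≤ 1) (φ : ℝ) :
    ‖cos φ • v + sin φ • w‖ ≤ 2 := by
  refine (norm_add_le _ _).trans ?_
  rw [norm_smul, norm_smul, Real.norm_eq_abs, Real.norm_eq_abs]
  nlinarith [abs_cos_le_one φ, abs_sin_le_one φ, abs_nonneg (cos φ), abs_nonneg (sin φ),
    norm_nonneg v, norm_nonneg w]

lemma norm_cos_smul_add_sin_smul_sub_le {v w : E} (hv : ‖v‖ ≤ 1) (hw : ‖w‖ ≤ 1) (φ ψ : ℝ) :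
    ‖(cos φ • v + sin φ • w) - (cos ψ • v + sin ψ • w)‖ ≤ 2 * |φ - ψ| := by
  rw [show (cos φ • v + sin φ • w) - (cos ψ • v + sin ψ • w)
      = (cos φ - cos ψ) • v + (sin φ - sin ψ) • w by simp only [sub_smul]; abel]
  refine (norm_add_le _ _).trans ?_
  rw [norm_smul, norm_smul, Real.norm_eq_abs, Real.norm_eq_abs]
  nlinarith [abs_cos_sub_cos_le φ ψ, abs_sin_sub_sin_le φ ψ, abs_nonneg (cos φ - cos ψ),
    abs_nonneg (sin φ - sin ψ), norm_nonneg v, norm_nonneg w]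

lemma lipschitzOnWith_capParam {u v w : E} (hu : ‖u‖ ≤ 1) (hv : ‖v‖ ≤ 1) (hw : ‖w‖ ≤ 1)
    {α : ℝ} (hα : 0 < α) : LipschitzOnWith 5 (capParam u v w α) {p | |p 0| ≤ α} := by
  refine LipschitzOnWith.of_dist_le_mul fun p _ q hq => ?_
  set e : ℝ → E := fun φ => cos φ • v + sin φ • w
  have h0 : |p 0 - q 0| ≤ dist p q := by simpa [Real.dist_eq] using dist_le_pi_dist p q 0
  have h1 : |p 1 - q 1| ≤ dist p q := by simpa [Real.dist_eq] using dist_le_pi_dist p q 1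
  have hsin : |sin (q 0)| ≤ α := (abs_sin_le_abs).trans hq
  have hlong : |sin (q 0)| * ‖e (p 1 / α) - e (q 1 / α)‖ ≤ 2 * |p 1 - q 1| := by
    calc |sin (q 0)| * ‖e (p 1 / α) - e (q 1 / α)‖ ≤ α * (2 * |p 1 / α - q 1 / α|) :=
          mul_le_mul hsin (norm_cos_smul_add_sin_smul_sub_le hv hw _ _) (norm_nonneg _) hα.le
      _ = 2 * |p 1 - q 1| := by
          rw [← sub_div, abs_div, abs_of_pos hα]; field_simp
  have hdiff : capParam u v w α p - capParam u v w α q = (cos (p 0) - cos (q 0)) • u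
      + (sin (p 0) - sin (q 0)) • e (p 1 / α) + sin (q 0) • (e (p 1 / α) - e (q 1 / α)) := by
    simp only [capParam, e, sub_smul, smul_sub]; abel
  rw [dist_eq_norm, hdiff, NNReal.coe_ofNat]
  refine (norm_add_le _ _).trans ((add_le_add (norm_add_le _ _) le_rfl).trans ?_)
  simp only [norm_smul, Real.norm_eq_abs]
  nlinarith [abs_cos_sub_cos_le (p 0) (q 0), abs_sin_sub_sin_le (p 0) (q 0),
    norm_cos_smul_add_sin_smul_le hv hw (p 1 / α), abs_nonneg (cos (p 0) - cos (q 0)),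
    abs_nonneg (sin (p 0) - sin (q 0))]

lemma sphere_inter_angle_le_subset_image_capParam (b : OrthonormalBasis (Fin 3) ℝ E) {α : ℝ}
    (hα : 0 < α) : sphere (0 : E) 1 ∩ {σ | angle (b 0) σ ≤ α} ⊆
      capParam (b 0) (b 1) (b 2) α '' Set.Icc ![0, -(π * α)] ![α, π * α] := by
  rintro σ ⟨hσ, hθα⟩
  rw [mem_sphere_zero_iff_norm] at hσ
  set θ := angle (b 0) σ
  set z : ℂ := ⟨⟪b 1, σ⟫_ℝ, ⟪b 2, σ⟫_ℝ⟩
  have hcos : cos θ = ⟪b 0, σ⟫_ℝ := by simp [θ, cos_angle, b.orthonormal.1 0, hσ]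
  have hsin : sin θ = ‖z‖ := by
    have hparseval := b.sum_inner_mul_inner σ σ
    rw [Fin.sum_univ_three, real_inner_self_eq_norm_sq, hσ] at hparseval
    rw [real_inner_comm (b 0), real_inner_comm (b 1), real_inner_comm (b 2)] at hparseval
    refine (pow_left_inj₀ (sin_angle_nonneg _ _) (norm_nonneg z) two_ne_zero).1 ?_
    rw [sin_sq, hcos, Complex.sq_norm, Complex.normSq_mk]
    linear_combination -hparseval
  have hφ := Complex.neg_pi_lt_arg z
  have hφ' := Complex.arg_le_pi z
  refine ⟨![θ, α * z.arg], ⟨?_, ?_⟩, ?_⟩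
  · simp only [Pi.le_def, Fin.forall_fin_two, Matrix.cons_val_zero, Matrix.cons_val_one]
    exact ⟨angle_nonneg _ _, by nlinarith⟩
  · simp only [Pi.le_def, Fin.forall_fin_two, Matrix.cons_val_zero, Matrix.cons_val_one]
    exact ⟨hθα, by nlinarith⟩
  · conv_rhs => rw [← b.sum_repr' σ, Fin.sum_univ_three]
    simp only [capParam, Matrix.cons_val_zero, Matrix.cons_val_one, mul_div_cancel_left₀ _ hα.ne',
      hcos, hsin, smul_add, smul_smul, Complex.norm_mul_cos_arg, Complex.norm_mul_sin_arg,
      add_assoc]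
    rfl

lemma hausdorffMeasure_sphere_inter_angle_le_le [FiniteDimensional ℝ E] [MeasurableSpace E]
    [BorelSpace E] (hE : Module.finrank ℝ E = 3) {u : E} (hu : u ≠ 0) {α : ℝ} (hα : 0 < α) :
    μH[2] (sphere (0 : E) 1 ∩ {σ | angle u σ ≤ α}) ≤ ENNReal.ofReal (50 * π * α ^ 2) := by
  obtain ⟨b, hb⟩ := OrthonormalBasis.exists_apply_eq (ι := Fin 3) (by simpa using hE) 0
    (norm_smul_inv_norm (𝕜 := ℝ) hu)
  have hangle : ∀ σ, angle u σ = angle (b 0) σ := fun σ => by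
    rw [hb, angle_smul_left_of_pos _ _ (by positivity)]
  set D : Set (Fin 2 → ℝ) := Set.Icc ![0, -(π * α)] ![α, π * α]
  have hD : D ⊆ {p | |p 0| ≤ α} := fun p hp => by
    have h0 : 0 ≤ p 0 := by simpa using hp.1 0
    exact (abs_le (b := α)).2 ⟨by linarith, by simpa using hp.2 0⟩
  have hlip := (lipschitzOnWith_capParam (b.orthonormal.1 0).le (b.orthonormal.1 1).le
    (b.orthonormal.1 2).le hα).mono hD
  calc μH[2] (sphere (0 : E) 1 ∩ {σ | angle u σ ≤ α})
      ≤ μH[2] (capParam (b 0) (b 1) (b 2) α '' D) := by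
        simp only [hangle]
        exact measure_mono (sphere_inter_angle_le_subset_image_capParam b hα)
    _ ≤ (5 : ℝ≥0) ^ (2 : ℝ) * μH[2] D := hlip.hausdorffMeasure_image_le zero_le_two
    _ = ENNReal.ofReal (50 * π * α ^ 2) := by
        rw [show (2 : ℝ) = (Fintype.card (Fin 2) : ℕ) by simp, hausdorffMeasure_pi_real,
          Real.volume_Icc_pi, Fin.prod_univ_two]
        simp only [ENNReal.coe_ofNat, Fintype.card_fin, Nat.cast_ofNat, ENNReal.rpow_ofNat,
          Matrix.cons_val_zero, sub_zero, Matrix.cons_val_one, Matrix.cons_val_fin_one,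
          sub_neg_eq_add]
        rw [show (5 : ℝ≥0∞) ^ 2 = ENNReal.ofReal 25 by norm_num, ← ENNReal.ofReal_mul hα.le,
          ← ENNReal.ofReal_mul (by norm_num)]
        congr 1
        ring

end SphericalCap

section Kernel

variable {E : Type*} [NormedAddCommGroup E] [InnerProductSpace ℝ E]

lemma inner_inv_norm_smul_eq_cos_angle (x : E) {σ : E} (hσ : ‖σ‖ = 1) :
    ⟪‖x‖⁻¹ • x, σ⟫_ℝ = cos (angle x σ) := by
  rw [cos_angle, hσ, mul_one, real_inner_smul_left, inv_mul_eq_div]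

lemma norm_sub_norm_smul_sq (x : E) {σ : E} (hσ : ‖σ‖ = 1) :
    ‖x - ‖x‖ • σ‖ ^ 2 = 2 * ‖x‖ ^ 2 * (1 - cos (angle x σ)) := by
  rcases eq_or_ne x 0 with rfl | hx
  · simp
  have hcos :=
    norm_sub_sq_eq_norm_sq_add_norm_sq_sub_two_mul_norm_mul_norm_mul_cos_angle x (‖x‖ • σ)
  rw [angle_smul_right_of_pos _ _ (norm_pos_iff.2 hx), norm_smul, norm_norm, hσ, mul_one] at hcos
  rw [sq, hcos]
  ring

lemma norm_sub_norm_smul_le_of_cos_angle_nonneg (x : E) {σ : E} (hσ : ‖σ‖ = 1)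
    (h : 0 ≤ cos (angle x σ)) : ‖x - ‖x‖ • σ‖ ≤ √2 * ‖x‖ := by
  refine (pow_le_pow_iff_left₀ (norm_nonneg _) (by positivity) two_ne_zero).1 ?_
  rw [norm_sub_norm_smul_sq x hσ, mul_pow, sq_sqrt zero_le_two]
  nlinarith [mul_nonneg (sq_nonneg ‖x‖) h]

lemma div_norm_le_angle_of_le_norm_sub (x : E) {σ : E} (hσ : ‖σ‖ = 1) {a : ℝ}
    (ha : a ≤ ‖x - ‖x‖ • σ‖) : a / ‖x‖ ≤ angle x σ := by
  have hle : ‖x - ‖x‖ • σ‖ ≤ angle x σ * ‖x‖ := by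
    have := angle_nonneg x σ
    refine (pow_le_pow_iff_left₀ (norm_nonneg _) (by positivity) two_ne_zero).1 ?_
    rw [norm_sub_norm_smul_sq x hσ]
    have hcos := sub_nonneg.2 (one_sub_sq_div_two_le_cos (x := angle x σ))
    nlinarith [mul_nonneg (sq_nonneg ‖x‖) hcos]
  exact div_le_of_le_mul₀ (norm_nonneg x) (angle_nonneg x σ) (ha.trans hle)

variable {ν K : ℝ} {b : ℝ → ℝ}

lemma kernel_mul_indicator_eq_zero (hb_zero : ∀ t < (0 : ℝ), b t = 0) (x : E) {σ : E}
    (hσ : ‖σ‖ = 1) {a : ℝ} (ha : √2 * ‖x‖ < a) :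
    b ⟪‖x‖⁻¹ • x, σ⟫_ℝ * (if a ≤ ‖x - ‖x‖ • σ‖ then 1 else 0) = 0 := by
  rw [inner_inv_norm_smul_eq_cos_angle x hσ]
  rcases lt_or_ge (cos (angle x σ)) 0 with hneg | hnonneg
  · rw [hb_zero _ hneg, zero_mul]
  · rw [if_neg ((norm_sub_norm_smul_le_of_cos_angle_nonneg x hσ hnonneg).trans_lt ha).not_ge,
      mul_zero]

lemma ofReal_kernel_mul_indicator_le (hb_zero : ∀ t < (0 : ℝ), b t = 0)
    (hb_upper : ∀ θ ∈ Set.Ioc (0 : ℝ) (π / 2), b (cos θ) ≤ K * θ ^ (-2 - ν))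
    (x : E) {σ : E} (hσ : ‖σ‖ = 1) {a : ℝ} (ha : 0 < a) :
    ENNReal.ofReal (b ⟪‖x‖⁻¹ • x, σ⟫_ℝ * (if a ≤ ‖x - ‖x‖ • σ‖ then 1 else 0)) ≤
      {σ | a / ‖x‖ ≤ angle x σ}.indicator
        (fun σ => ENNReal.ofReal (K * angle x σ ^ (-2 - ν))) σ := by
  rw [inner_inv_norm_smul_eq_cos_angle x hσ]
  rcases lt_or_ge (cos (angle x σ)) 0 with hneg | hnonneg
  · simp [hb_zero _ hneg]
  split_ifs with hfar
  swap
  · simp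
  have hpos : 0 < angle x σ := by
    refine (angle_nonneg x σ).lt_of_ne' fun h0 => ?_
    have hsq := norm_sub_norm_smul_sq x hσ
    rw [h0, cos_zero, sub_self, mul_zero, sq_eq_zero_iff, norm_eq_zero] at hsq
    rw [hsq, norm_zero] at hfar
    linarith
  have hle : angle x σ ≤ π / 2 := by
    by_contra! h
    linarith [cos_neg_of_pi_div_two_lt_of_lt h (by linarith [angle_le_pi x σ, pi_pos])]
  rw [mul_one, Set.indicator_of_mem (s := {σ | a / ‖x‖ ≤ angle x σ})
    (div_norm_le_angle_of_le_norm_sub x hσ hfar)]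
  exact ENNReal.ofReal_le_ofReal (hb_upper _ ⟨hpos, hle⟩)

end Kernel

lemma jap_pos (v : V3) : 0 < jap v :=
  sqrt_pos.2 (by positivity)

lemma norm_le_jap (v : V3) : ‖v‖ ≤ jap v :=
  (le_sqrt (norm_nonneg v) (by positivity)).2 (by linarith)

lemma setLIntegral_sphereMeasure_angle_rpow_le {u : V3} (hu : u ≠ 0) {ν r₀ : ℝ} (hν : 0 < ν)
    (hr₀ : 0 < r₀) :
    ∫⁻ σ in {σ | r₀ ≤ angle u σ}, ENNReal.ofReal (angle u σ ^ (-2 - ν)) ∂sphereMeasure ≤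
      ENNReal.ofReal (200 * π / (1 - 2 ^ (-ν)) * r₀ ^ (-ν)) := by
  have hcap : ∀ r, 0 < r →
      sphereMeasure {σ | angle u σ ≤ r} ≤ ENNReal.ofReal (50 * π * r ^ (2 : ℝ)) := by
    intro r hr
    rw [sphereMeasure, Measure.restrict_apply' isClosed_sphere.measurableSet, Set.inter_comm,
      rpow_two]
    exact hausdorffMeasure_sphere_inter_angle_le_le finrank_euclideanSpace_fin hu hr
  have hmeas : Measurable (angle u) := by unfold angle; fun_prop
  have := setLIntegral_rpow_neg_le_of_measure_le_rpow hmeas zero_le_two hν hr₀ hcap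
  convert this using 4
  rw [rpow_two]
  ring

section SphereIntegral

variable {ν K : ℝ} {b : ℝ → ℝ}

lemma lintegral_kernel_mul_indicator_le (hν : 0 < ν) (hK : 0 ≤ K)
    (hb_zero : ∀ t < (0 : ℝ), b t = 0)
    (hb_upper : ∀ θ ∈ Set.Ioc (0 : ℝ) (π / 2), b (cos θ) ≤ K * θ ^ (-2 - ν))
    {ξ : V3} (hξ : ξ ≠ 0) {a : ℝ} (ha : 0 < a) :
    ∫⁻ σ, ENNReal.ofReal (b ⟪‖ξ‖⁻¹ • ξ, σ⟫_ℝ * (if a ≤ ‖ξ - ‖ξ‖ • σ‖ then 1 else 0))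
        ∂sphereMeasure ≤
      ENNReal.ofReal (K * (200 * π / (1 - 2 ^ (-ν))) * (‖ξ‖ / a) ^ ν) := by
  have hsphere : ∀ᵐ σ ∂sphereMeasure, ‖σ‖ = 1 :=
    ae_restrict_of_forall_mem isClosed_sphere.measurableSet fun σ => mem_sphere_zero_iff_norm.1
  set S := {σ | a / ‖ξ‖ ≤ angle ξ σ}
  calc _ ≤ ∫⁻ σ, S.indicator (fun σ => ENNReal.ofReal (K * angle ξ σ ^ (-2 - ν))) σ
          ∂sphereMeasure :=
        lintegral_mono_ae (hsphere.mono fun σ hσ =>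
          ofReal_kernel_mul_indicator_le hb_zero hb_upper ξ hσ ha)
    _ ≤ ∫⁻ σ in S, ENNReal.ofReal (K * angle ξ σ ^ (-2 - ν)) ∂sphereMeasure :=
        lintegral_indicator_le _ _
    _ = ENNReal.ofReal K * ∫⁻ σ in S, ENNReal.ofReal (angle ξ σ ^ (-2 - ν)) ∂sphereMeasure := by
        simp_rw [ENNReal.ofReal_mul hK]
        exact lintegral_const_mul' _ _ ENNReal.ofReal_ne_top
    _ ≤ ENNReal.ofReal K * ENNReal.ofReal (200 * π / (1 - 2 ^ (-ν)) * (a / ‖ξ‖) ^ (-ν)) := by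
        gcongr
        exact setLIntegral_sphereMeasure_angle_rpow_le hξ hν (by positivity)
    _ = ENNReal.ofReal (K * (200 * π / (1 - 2 ^ (-ν))) * (‖ξ‖ / a) ^ ν) := by
        rw [← ENNReal.ofReal_mul hK, rpow_neg (x := a / ‖ξ‖) (by positivity),
          ← inv_rpow (by positivity), inv_div, mul_assoc]

lemma lintegral_kernel_mul_indicator_eq_zero (hb_zero : ∀ t < (0 : ℝ), b t = 0) {ξ : V3}
    {a : ℝ} (ha : √2 * ‖ξ‖ < a) :
    ∫⁻ σ, ENNReal.ofReal (b ⟪‖ξ‖⁻¹ • ξ, σ⟫_ℝ * (if a ≤ ‖ξ - ‖ξ‖ • σ‖ then 1 else 0))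
        ∂sphereMeasure = 0 := by
  refine (lintegral_congr_ae ?_).trans lintegral_zero
  refine ae_restrict_of_forall_mem isClosed_sphere.measurableSet fun σ hσ => ?_
  dsimp only
  rw [kernel_mul_indicator_eq_zero hb_zero ξ (mem_sphere_zero_iff_norm.1 hσ) ha,
    ENNReal.ofReal_zero]

end SphereIntegral

theorem sphere_integral_large_deviation_bound_general
    (ν K : ℝ) (b : ℝ → ℝ)
    (hν : 0 < ν) (hK : 0 < K)
    (hb_zero : ∀ t < (0 : ℝ), b t = 0)
    (hb_upper : ∀ θ ∈ Set.Ioc (0 : ℝ) (Real.pi / 2),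
      b (Real.cos θ) ≤ K * θ ^ (-2 - ν)) :
    ∃ C : ℝ, 0 < C ∧ ∀ ξ ξs : V3, ξ ≠ 0 →
      (∫⁻ σ : V3,
          ENNReal.ofReal (b ⟪‖ξ‖⁻¹ • ξ, σ⟫_ℝ *
            (if jap ξs ≤ ‖ξ - ‖ξ‖ • σ‖ then 1 else 0)) ∂sphereMeasure)
        ≤ ENNReal.ofReal (C * (jap ξ / jap ξs) ^ ν *
            (if jap ξs ≤ Real.sqrt 2 * ‖ξ‖ then 1 else 0)) := by
  have hq : 0 < 1 - (2 : ℝ) ^ (-ν) :=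
    sub_pos.2 (rpow_lt_one_of_one_lt_of_neg one_lt_two (neg_neg_of_pos hν))
  refine ⟨K * (200 * π / (1 - 2 ^ (-ν))), by positivity, fun ξ ξs hξ => ?_⟩
  have ha := jap_pos ξs
  by_cases hnear : jap ξs ≤ √2 * ‖ξ‖
  · rw [if_pos hnear, mul_one]
    refine (lintegral_kernel_mul_indicator_le hν hK.le hb_zero hb_upper hξ ha).trans ?_
    gcongr
    exact norm_le_jap ξ
  · rw [if_neg hnear, mul_zero, lintegral_kernel_mul_indicator_eq_zero hb_zero (not_le.1 hnear)]
    exact zero_le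

/-- spherical integral bound on the large-deviation region
(estimate `A-2-2`). -/
theorem sphere_integral_large_deviation_bound
    (ν K : ℝ) (b : ℝ → ℝ)
    (hν : 0 < ν) (hν2 : ν < 2) (hK : 0 < K)
    (hb_meas : Measurable b) (hb_nonneg : ∀ t, 0 ≤ b t)
    (hb_zero : ∀ t < (0 : ℝ), b t = 0)
    (hb_upper : ∀ θ ∈ Set.Ioc (0 : ℝ) (Real.pi / 2),
      b (Real.cos θ) ≤ K * θ ^ (-2 - ν)) :
    ∃ C : ℝ, 0 < C ∧ ∀ ξ ξs : V3, ξ ≠ 0 →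
      (∫⁻ σ : V3,
          ENNReal.ofReal (b ⟪‖ξ‖⁻¹ • ξ, σ⟫_ℝ *
            (if jap ξs ≤ ‖ξ - ‖ξ‖ • σ‖ then 1 else 0)) ∂sphereMeasure)
        ≤ ENNReal.ofReal (C * (jap ξ / jap ξs) ^ ν *
            (if jap ξs ≤ Real.sqrt 2 * ‖ξ‖ then 1 else 0)) :=
  sphere_integral_large_deviation_bound_general ν K b hν hK hb_zero hb_upper

end
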